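/- arXiv:1006.0406 — 4 statements merged into one kernel-verified Lean document; each statement's English description precedes it below -/
import Mathlib

section
/- Let A be a measurable set with μ(A) < ∞ and let (A_n)_{n≥1} be a sequence of measurable sets such that (A_n) →_μ A and μ(A_n △ A_m) ≤ 2^{-n} for all n < m, where △ denotes symmetric difference. Then μ(A △ liminf_n A_n) = 0 and μ(A △ limsup_n A_n) = 0, where liminf_n A_n = ⋃_n ⋂_{m≥n} A_m and limsup_n A_n = ⋂_n ⋃_{m≥n} A_m. -/
/-! Up to null sets, `liminf Aₙ ≤ A ≤ limsup Aₙ ≤ liminf Aₙ`. The first two inequalities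
come from the two halves of `(Aₙ) →_μ A`, the second one tested on `B = A`, which has finite
measure. The last is Borel–Cantelli: the consecutive symmetric differences have summable
measures, so almost every point belongs to only finitely many of them, and its membership
in `Aₙ` is eventually constant. -/

open MeasureTheory Filter Set
open scoped ENNReal symmDiff

/-- The limit relation `→_μ`: `(A n) →_μ L` iff `μ (A n \ L) → 0` and, for every
measurable `B` of finite measure, `μ ((L ∩ B) \ A n) → 0`. -/
def ConvMu {Ω : Type*} [MeasurableSpace Ω] (μ : Measure Ω)
    (A : ℕ → Set Ω) (L : Set Ω) : Prop :=
  Tendsto (fun n => μ (A n \ L)) atTop (nhds 0) ∧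
    ∀ B : Set Ω, MeasurableSet B → μ B < ⊤ →
      Tendsto (fun n => μ ((L ∩ B) \ A n)) atTop (nhds 0)

theorem Nat.eventually_of_frequently_of_eventually_iff_succ {p : ℕ → Prop}
    (h : ∀ᶠ n in atTop, p n ↔ p (n + 1)) (hp : ∃ᶠ n in atTop, p n) :
    ∀ᶠ n in atTop, p n := by
  obtain ⟨N, hN⟩ := eventually_atTop.1 h
  obtain ⟨m, hm, hpm⟩ := frequently_atTop.1 hp N
  refine eventually_atTop.2 ⟨m, fun k hk => ?_⟩
  induction k, hk using Nat.le_induction with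
  | base => exact hpm
  | succ k hk ih => exact (hN k (hm.trans hk)).1 ih

namespace MeasureTheory

variable {α : Type*} [MeasurableSpace α] {μ : Measure α} {s : ℕ → Set α} {t : Set α}

theorem measure_liminf_atTop_eq_zero_of_tendsto (h : Tendsto (fun n => μ (s n)) atTop (nhds 0)) :
    μ (liminf s atTop) = 0 := by
  rw [liminf_eq_iSup_iInf_of_nat]
  refine measure_iUnion_null fun n => le_antisymm (ge_of_tendsto h ?_) zero_le
  filter_upwards [eventually_ge_atTop n] with m hm
  exact measure_mono (biInter_subset_of_mem hm)

theorem liminf_ae_le_of_tendsto_measure_diff (h : Tendsto (fun n => μ (s n \ t)) atTop (nhds 0)) :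
    (liminf s atTop : Set α) ≤ᵐ[μ] t := by
  rw [ae_le_set, liminf_sdiff]
  exact measure_liminf_atTop_eq_zero_of_tendsto h

theorem ae_le_limsup_of_tendsto_measure_diff (h : Tendsto (fun n => μ (t \ s n)) atTop (nhds 0)) :
    t ≤ᵐ[μ] (limsup s atTop : Set α) := by
  rw [ae_le_set, sdiff_limsup]
  exact measure_liminf_atTop_eq_zero_of_tendsto h

theorem limsup_ae_le_liminf_of_tsum_measure_symmDiff_ne_top
    (h : ∑' n, μ (s n ∆ s (n + 1)) ≠ ∞) :
    (limsup s atTop : Set α) ≤ᵐ[μ] (liminf s atTop : Set α) := by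
  filter_upwards [ae_eventually_notMem h] with x hx hmem
  refine mem_liminf_iff_eventually_mem.2 <|
    Nat.eventually_of_frequently_of_eventually_iff_succ ?_ (mem_limsup_iff_frequently_mem.1 hmem)
  filter_upwards [hx] with n hn
  rw [mem_symmDiff] at hn
  tauto

end MeasureTheory

theorem statement1_general {Ω : Type*} [MeasurableSpace Ω] (μ : Measure Ω)
    (A : Set Ω) (hA : MeasurableSet A) (hAfin : μ A < ⊤)
    (Aseq : ℕ → Set Ω)
    (hconv : ConvMu μ Aseq A)
    (hcauchy : ∀ n m, 1 ≤ n → n < m →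
      μ (symmDiff (Aseq n) (Aseq m)) ≤ (2 : ℝ≥0∞)⁻¹ ^ n) :
    μ (symmDiff A (⋃ n, ⋂ m, ⋂ _ : n ≤ m, Aseq m)) = 0 ∧
    μ (symmDiff A (⋂ n, ⋃ m, ⋃ _ : n ≤ m, Aseq m)) = 0 := by
  have hliminf_eq : ⋃ n, ⋂ m, ⋂ _ : n ≤ m, Aseq m = liminf Aseq atTop :=
    liminf_eq_iSup_iInf_of_nat.symm
  have hlimsup_eq : ⋂ n, ⋃ m, ⋃ _ : n ≤ m, Aseq m = limsup Aseq atTop :=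
    limsup_eq_iInf_iSup_of_nat.symm
  rw [hliminf_eq, hlimsup_eq]
  have hliminf : (liminf Aseq atTop : Set Ω) ≤ᵐ[μ] A :=
    liminf_ae_le_of_tendsto_measure_diff hconv.1
  have hlimsup : A ≤ᵐ[μ] (limsup Aseq atTop : Set Ω) :=
    ae_le_limsup_of_tendsto_measure_diff (by simpa using hconv.2 A hA hAfin)
  have hsum : ∑' n, μ (Aseq (n + 1) ∆ Aseq (n + 1 + 1)) ≠ ∞ := by
    refine ne_top_of_le_ne_top ?_
      (ENNReal.tsum_le_tsum fun n => hcauchy (n + 1) _ n.succ_pos (lt_add_one _))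
    simp [ENNReal.tsum_geometric_add_one]
  have hBC : (limsup Aseq atTop : Set Ω) ≤ᵐ[μ] (liminf Aseq atTop : Set Ω) := by
    simpa only [limsup_nat_add, liminf_nat_add] using
      limsup_ae_le_liminf_of_tsum_measure_symmDiff_ne_top hsum
  simp only [measure_symmDiff_eq_zero_iff]
  exact ⟨(hlimsup.trans hBC).antisymm hliminf, hlimsup.antisymm (hBC.trans hliminf)⟩

/-- If `μ A < ∞`, `(A n) →_μ A` and `μ (A n ∆ A m) ≤ 2⁻ⁿ` for all
`1 ≤ n < m`, then `A` equals both `liminf A n` and `limsup A n` up to `μ`-null sets. -/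
theorem statement1 {Ω : Type*} [MeasurableSpace Ω] (μ : Measure Ω)
    (A : Set Ω) (hA : MeasurableSet A) (hAfin : μ A < ⊤)
    (Aseq : ℕ → Set Ω) (hAseq : ∀ n, MeasurableSet (Aseq n))
    (hconv : ConvMu μ Aseq A)
    (hcauchy : ∀ n m, 1 ≤ n → n < m →
      μ (symmDiff (Aseq n) (Aseq m)) ≤ (2 : ℝ≥0∞)⁻¹ ^ n) :
    μ (symmDiff A (⋃ n, ⋂ m, ⋂ _ : n ≤ m, Aseq m)) = 0 ∧
    μ (symmDiff A (⋂ n, ⋃ m, ⋃ _ : n ≤ m, Aseq m)) = 0 :=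
  statement1_general μ A hA hAfin Aseq hconv hcauchy
end

section
/- If (A_n) is a sequence of measurable sets and A a measurable set with (A_n) →_μ A, then lim_n ˜μ(A_n △ A) = 0, where △ denotes symmetric difference. (In other words, convergence in the limit relation →_μ implies convergence in the limit relation →_˜μ.) -/
open MeasureTheory Filter Set
open scoped ENNReal

/-- The induced probability measure `˜μ(A) = Σ_{n=1}^∞ (μ(A ∩ Dₙ)/μ(Dₙ))·2⁻ⁿ`,
where `D k` stands here for the paper's `D_{k+1}` (so the index runs over `n ≥ 1`). -/
noncomputable def tmu {Ω : Type*} [MeasurableSpace Ω] (μ : Measure Ω)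
    (D : ℕ → Set Ω) (A : Set Ω) : ℝ≥0∞ :=
  ∑' n : ℕ, μ (A ∩ D n) / μ (D n) / 2 ^ (n + 1)


open scoped symmDiff Topology

/-! Every term `μ ((Aₙ ∆ A) ∩ D k) / μ (D k) / 2 ^ (k + 1)` of `˜μ (Aₙ ∆ A)` tends to `0`, since
`(Aₙ ∆ A) ∩ D k ⊆ (Aₙ \ A) ∪ ((A ∩ D k) \ Aₙ)` and `D k` has finite measure, and it is bounded by
`2⁻¹ ^ (k + 1)`, whose sum is finite. Dominated convergence for series concludes. -/

theorem ENNReal.tendsto_tsum_of_dominated_convergence {β : Type*} {f : ℕ → β → ℝ≥0∞}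
    {g : β → ℝ≥0∞} {bound : β → ℝ≥0∞} (h_sum : ∑' k, bound k ≠ ∞)
    (hfg : ∀ k, Tendsto (f · k) atTop (𝓝 (g k))) (h_bound : ∀ n k, f n k ≤ bound k) :
    Tendsto (fun n => ∑' k, f n k) atTop (𝓝 (∑' k, g k)) := by
  let _ : MeasurableSpace β := ⊤
  have : MeasurableSingletonClass β := ⟨fun _ => trivial⟩
  simp only [← lintegral_count]
  exact tendsto_lintegral_of_dominated_convergence bound (fun _ => measurable_from_top)
    (fun n => .of_forall (h_bound n)) (by rwa [lintegral_count]) (.of_forall hfg)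

section

variable {Ω : Type*} [MeasurableSpace Ω] {μ : Measure Ω}

theorem ConvMu.tendsto_measure_symmDiff_inter {A : ℕ → Set Ω} {L : Set Ω} (h : ConvMu μ A L)
    {B : Set Ω} (hB : MeasurableSet B) (hμB : μ B < ∞) :
    Tendsto (fun n => μ ((A n ∆ L) ∩ B)) atTop (𝓝 0) := by
  have hsum := h.1.add (h.2 B hB hμB)
  rw [add_zero] at hsum
  refine tendsto_of_tendsto_of_tendsto_of_le_of_le tendsto_const_nhds hsum (fun _ => zero_le)
    fun n => (measure_mono ?_).trans (measure_union_le _ _)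
  rintro x ⟨hx | hx, hxB⟩
  exacts [Or.inl hx, Or.inr ⟨⟨hx.1, hxB⟩, hx.2⟩]

theorem measure_inter_div_measure_le_one (X B : Set Ω) : μ (X ∩ B) / μ B ≤ 1 :=
  ENNReal.div_le_of_le_mul (by simpa using measure_mono inter_subset_right)

theorem tendsto_measure_inter_div_measure_zero {X : ℕ → Set Ω} {B : Set Ω}
    (h : Tendsto (fun n => μ (X n ∩ B)) atTop (𝓝 0)) :
    Tendsto (fun n => μ (X n ∩ B) / μ B) atTop (𝓝 0) := by
  by_cases hB : μ B = 0
  · simp [measure_mono_null inter_subset_right hB]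
  · simpa using ENNReal.Tendsto.div_const h (Or.inr hB)

theorem tendsto_tmu_zero_of_tendsto_measure_inter {D X : ℕ → Set Ω}
    (h : ∀ k, Tendsto (fun n => μ (X n ∩ D k)) atTop (𝓝 0)) :
    Tendsto (fun n => tmu μ D (X n)) atTop (𝓝 0) := by
  have h_sum : ∑' k : ℕ, (2⁻¹ : ℝ≥0∞) ^ (k + 1) ≠ ∞ := by
    simp [ENNReal.tsum_geometric_add_one]
  have h_term (k : ℕ) :
      Tendsto (fun n => μ (X n ∩ D k) / μ (D k) / 2 ^ (k + 1)) atTop (𝓝 0) := by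
    simpa using ENNReal.Tendsto.div_const (tendsto_measure_inter_div_measure_zero (h k))
      (Or.inr (by simp))
  have h_bound (n k : ℕ) : μ (X n ∩ D k) / μ (D k) / 2 ^ (k + 1) ≤ 2⁻¹ ^ (k + 1) := by
    rw [← ENNReal.inv_pow, ← one_div]
    exact ENNReal.div_le_div_right (measure_inter_div_measure_le_one _ _) _
  simpa only [tmu, tsum_zero] using
    ENNReal.tendsto_tsum_of_dominated_convergence h_sum h_term h_bound

end

theorem statement6_general {Ω : Type*} [MeasurableSpace Ω] (μ : Measure Ω)
    (D : ℕ → Set Ω) (hDmeas : ∀ n, MeasurableSet (D n))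
    (hDfin : ∀ n, μ (D n) < ⊤)
    (Aseq : ℕ → Set Ω)
    (A : Set Ω)
    (hconv : ConvMu μ Aseq A) :
    Tendsto (fun n => tmu μ D (symmDiff (Aseq n) A)) atTop (nhds 0) :=
  tendsto_tmu_zero_of_tendsto_measure_inter fun k =>
    hconv.tendsto_measure_symmDiff_inter (hDmeas k) (hDfin k)

/-- convergence under `→_μ` implies convergence under `→_˜μ`:
if `(A n) →_μ A` then `˜μ (A n ∆ A) → 0`. -/
theorem statement6 {Ω : Type*} [MeasurableSpace Ω] (μ : Measure Ω)
    (D : ℕ → Set Ω) (hDmeas : ∀ n, MeasurableSet (D n))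
    (hDdisj : ∀ k l, k ≠ l → Disjoint (D k) (D l))
    (hDunion : (⋃ n, D n) = Set.univ)
    (hDlb : ∀ n, (2 : ℝ≥0∞) ^ (n + 1) ≤ μ (D n))
    (hDfin : ∀ n, μ (D n) < ⊤)
    (Aseq : ℕ → Set Ω) (hAseq : ∀ n, MeasurableSet (Aseq n))
    (A : Set Ω) (hA : MeasurableSet A)
    (hconv : ConvMu μ Aseq A) :
    Tendsto (fun n => tmu μ D (symmDiff (Aseq n) A)) atTop (nhds 0) :=
  statement6_general μ D hDmeas hDfin Aseq A hconv
end

section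
/- Let A be a measurable set with μ(A) = ∞ and (A_n)_{n≥1} a sequence of measurable sets with μ(A_n) < ∞ for every n, such that (A_n) →_μ A and, for all n < m: μ(A_n \ A_m) ≤ 2^{-n}, μ((A_m ∩ C_n) \ A_n) ≤ 2^{-n}, and μ(A_n) ≥ 2^n. Then for every n one has μ(A_n \ A) ≤ 2^{-n} and μ((A ∩ C_n) \ A_n) ≤ 2^{-n}. -/
open MeasureTheory Filter Set
open scoped ENNReal

/-- with `(C n)` as in the context, if `μ A = ∞`, each `μ (A n) < ∞`,
`(A n) →_μ A`, and for all `1 ≤ n < m`: `μ (A n \ A m) ≤ 2⁻ⁿ`,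
`μ ((A m ∩ C n) \ A n) ≤ 2⁻ⁿ` and `μ (A n) ≥ 2ⁿ`, then for every `n ≥ 1` one has
`μ (A n \ A) ≤ 2⁻ⁿ` and `μ ((A ∩ C n) \ A n) ≤ 2⁻ⁿ`. -/
theorem statement12 {Ω : Type*} [MeasurableSpace Ω] (μ : Measure Ω)
    (C : ℕ → Set Ω) (hCmeas : ∀ n, MeasurableSet (C n)) (hCmono : Monotone C)
    (hC0 : C 0 = ∅) (hCfin : ∀ n, μ (C n) < ⊤)
    (hCgrow : ∀ n, (2 : ℝ≥0∞) ^ (n + 1) ≤ μ (C (n + 1) \ C n))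
    (hCunion : (⋃ n, C n) = Set.univ)
    (A : Set Ω) (hA : MeasurableSet A) (hAinf : μ A = ⊤)
    (Aseq : ℕ → Set Ω) (hAseq : ∀ n, MeasurableSet (Aseq n))
    (hAseqfin : ∀ n, μ (Aseq n) < ⊤)
    (hconv : ConvMu μ Aseq A)
    (hc1 : ∀ n m, 1 ≤ n → n < m → μ (Aseq n \ Aseq m) ≤ (2 : ℝ≥0∞)⁻¹ ^ n)
    (hc2 : ∀ n m, 1 ≤ n → n < m → μ ((Aseq m ∩ C n) \ Aseq n) ≤ (2 : ℝ≥0∞)⁻¹ ^ n)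
    (hc3 : ∀ n, 1 ≤ n → (2 : ℝ≥0∞) ^ n ≤ μ (Aseq n)) :
    ∀ n, 1 ≤ n →
      μ (Aseq n \ A) ≤ (2 : ℝ≥0∞)⁻¹ ^ n ∧
      μ ((A ∩ C n) \ Aseq n) ≤ (2 : ℝ≥0∞)⁻¹ ^ n := by
  intro n hn
  constructor
  · -- μ (Aseq n \ A) ≤ μ (Aseq n \ Aseq m) + μ (Aseq m \ A) for m > n
    have hlim : Tendsto (fun m => (2 : ℝ≥0∞)⁻¹ ^ n + μ (Aseq m \ A)) atTop
        (nhds ((2 : ℝ≥0∞)⁻¹ ^ n)) := by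
      simpa using (hconv.1.const_add ((2 : ℝ≥0∞)⁻¹ ^ n))
    refine ge_of_tendsto hlim ?_
    filter_upwards [eventually_gt_atTop n] with m hm
    calc μ (Aseq n \ A) ≤ μ ((Aseq n \ Aseq m) ∪ (Aseq m \ A)) := by
          apply measure_mono
          intro x hx
          by_cases hxm : x ∈ Aseq m
          · exact Or.inr ⟨hxm, hx.2⟩
          · exact Or.inl ⟨hx.1, hxm⟩
      _ ≤ μ (Aseq n \ Aseq m) + μ (Aseq m \ A) := measure_union_le _ _
      _ ≤ (2 : ℝ≥0∞)⁻¹ ^ n + μ (Aseq m \ A) := by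
          gcongr; exact hc1 n m hn hm
  · have hlim : Tendsto (fun m => (2 : ℝ≥0∞)⁻¹ ^ n + μ ((A ∩ C n) \ Aseq m)) atTop
        (nhds ((2 : ℝ≥0∞)⁻¹ ^ n)) := by
      simpa using ((hconv.2 (C n) (hCmeas n) (hCfin n)).const_add ((2 : ℝ≥0∞)⁻¹ ^ n))
    refine ge_of_tendsto hlim ?_
    filter_upwards [eventually_gt_atTop n] with m hm
    calc μ ((A ∩ C n) \ Aseq n)
        ≤ μ (((Aseq m ∩ C n) \ Aseq n) ∪ ((A ∩ C n) \ Aseq m)) := by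
          apply measure_mono
          intro x hx
          by_cases hxm : x ∈ Aseq m
          · exact Or.inl ⟨⟨hxm, hx.1.2⟩, hx.2⟩
          · exact Or.inr ⟨hx.1, hxm⟩
      _ ≤ μ ((Aseq m ∩ C n) \ Aseq n) + μ ((A ∩ C n) \ Aseq m) := measure_union_le _ _
      _ ≤ (2 : ℝ≥0∞)⁻¹ ^ n + μ ((A ∩ C n) \ Aseq m) := by
          gcongr; exact hc2 n m hn hm
end

section
/- Assume moreover that C_n ∈ ℛ for every n ≥ 1. Then for every measurable set A ∈ 𝒜 with μ(A) = ∞ there exists a sequence (E_n)_{n≥1} of sets in ℛ such that (E_n) →_μ A and, for all n < m: μ(E_n \ E_m) ≤ 2^{-n}, μ((E_m ∩ C_n) \ E_n) ≤ 2^{-n}, and μ(E_n) ≥ 2^n. (Every measurable set of infinite measure admits a δ_μ-expansion.) -/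
/-!
Exhaust `A` by the finite-measure pieces `A ∩ C (M n)`, where `M` grows so fast that
`μ (A ∩ C (M n)) ≥ 2 ^ n + 1`, and approximate each piece inside `C (M n)` by a set `E n ∈ R`
up to `2⁻¹ ^ (n + 1)` on both sides; this is possible because `R` is a ring generating the
σ-algebra and `μ` restricted to `C (M n) ∈ R` is finite. Every estimate then follows by comparing
`E n` and `E k` with `A` through `s \ t ⊆ (s \ u) ∪ ((u ∩ K) \ t)` for `s ⊆ K`.
-/

open MeasureTheory Filter Set
open scoped ENNReal

open Topology

theorem ENNReal.inv_two_pow_succ_add_le {n k : ℕ} (h : n ≤ k) :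
    (2 : ℝ≥0∞)⁻¹ ^ (n + 1) + 2⁻¹ ^ (k + 1) ≤ 2⁻¹ ^ n :=
  calc (2 : ℝ≥0∞)⁻¹ ^ (n + 1) + 2⁻¹ ^ (k + 1) ≤ 2⁻¹ ^ (n + 1) + 2⁻¹ ^ (n + 1) := by
        gcongr 2⁻¹ ^ (n + 1) + ?_
        exact pow_le_pow_right_of_le_one' (ENNReal.inv_le_one.2 one_le_two) (by omega)
    _ = 2⁻¹ ^ n := by rw [pow_succ, ← mul_add, ENNReal.inv_two_add_inv_two, mul_one]

section

variable {Ω : Type*} [m : MeasurableSpace Ω] {μ : Measure Ω}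
  {C E : ℕ → Set Ω} {A : Set Ω} {M : ℕ → ℕ} {ε : ℕ → ℝ≥0∞}

theorem measure_sdiff_le_measure_sdiff_add {s t u K : Set Ω} (hs : s ⊆ K) :
    μ (s \ t) ≤ μ (s \ u) + μ ((u ∩ K) \ t) := by
  refine (measure_mono (t := (s \ u) ∪ ((u ∩ K) \ t)) ?_).trans (measure_union_le _ _)
  rintro x ⟨hxs, hxt⟩
  by_cases hxu : x ∈ u
  · exact Or.inr ⟨⟨hxu, hs hxs⟩, hxt⟩
  · exact Or.inl ⟨hxs, hxu⟩

theorem MeasureTheory.IsSetRing.exists_mem_subset_measure_sdiff_lt {R : Set (Set Ω)}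
    (hR : IsSetRing R) (hgen : MeasurableSpace.generateFrom R = m) {K : Set Ω} (hKR : K ∈ R)
    (hK : μ K ≠ ∞) (hA : MeasurableSet A) {δ : ℝ≥0∞} (hδ : 0 < δ) :
    ∃ E ∈ R, E ⊆ K ∧ μ (E \ A) < δ ∧ μ ((A ∩ K) \ E) < δ := by
  have : IsFiniteMeasure (μ.restrict K) := isFiniteMeasure_restrict.mpr hK
  have hKmeas : MeasurableSet K := hgen ▸ MeasurableSpace.measurableSet_generateFrom hKR
  obtain ⟨t, htR, ht⟩ := exists_measure_symmDiff_lt_of_generateFrom_isSetRing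
    (μ := μ.restrict K) hR ⟨{K}, countable_singleton K, singleton_subset_iff.mpr hKR,
      by simp [Measure.restrict_apply hKmeas.compl]⟩ hgen.symm hA hδ
  rw [Measure.restrict_apply' hKmeas] at ht
  refine ⟨t ∩ K, hR.inter_mem htR hKR, inter_subset_right,
    (measure_mono ?_).trans_lt ht, (measure_mono ?_).trans_lt ht⟩
  · exact fun x ⟨⟨hxt, hxK⟩, hxA⟩ => ⟨Or.inl ⟨hxt, hxA⟩, hxK⟩
  · exact fun x ⟨⟨hxA, hxK⟩, hxE⟩ => ⟨Or.inr ⟨hxA, fun hxt => hxE ⟨hxt, hxK⟩⟩, hxK⟩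

theorem tendsto_measure_sdiff_atTop_of_iUnion_eq_univ (hCmeas : ∀ n, MeasurableSet (C n))
    (hCmono : Monotone C) (hCunion : ⋃ n, C n = univ) {B : Set Ω} (hBmeas : MeasurableSet B)
    (hB : μ B ≠ ∞) : Tendsto (fun n => μ (B \ C n)) atTop (𝓝 0) := by
  have := tendsto_measure_iInter_atTop (μ := μ)
    (fun n => (hBmeas.diff (hCmeas n)).nullMeasurableSet)
    (fun i j h => sdiff_subset_sdiff_right (hCmono h))
    ⟨0, ne_top_of_le_ne_top hB (measure_mono sdiff_subset)⟩
  rwa [← sdiff_iUnion, hCunion, sdiff_univ, measure_empty] at this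

theorem convMu_of_tendsto (hCmeas : ∀ n, MeasurableSet (C n)) (hCmono : Monotone C)
    (hCunion : ⋃ n, C n = univ) (hout : Tendsto (fun n => μ (E n \ A)) atTop (𝓝 0))
    (hin : Tendsto (fun n => μ ((A ∩ C n) \ E n)) atTop (𝓝 0)) : ConvMu μ E A := by
  refine ⟨hout, fun B hBmeas hB => ?_⟩
  have hbound (n : ℕ) : μ ((A ∩ B) \ E n) ≤ μ (B \ C n) + μ ((A ∩ C n) \ E n) := by
    refine (measure_sdiff_le_measure_sdiff_add (u := C n) inter_subset_left).trans ?_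
    rw [inter_comm (C n)]
    gcongr
    exact inter_subset_right
  have hlim := (tendsto_measure_sdiff_atTop_of_iUnion_eq_univ hCmeas hCmono hCunion hBmeas
    hB.ne).add hin
  rw [add_zero] at hlim
  exact tendsto_of_tendsto_of_tendsto_of_le_of_le tendsto_const_nhds hlim (fun _ => zero_le)
    hbound

theorem exists_strictMono_lt_and_le_measure_inter (hCmono : Monotone C)
    (hCunion : ⋃ n, C n = univ) (hA : μ A = ∞) {b : ℕ → ℝ≥0∞} (hb : ∀ n, b n ≠ ∞) :
    ∃ M : ℕ → ℕ, StrictMono M ∧ ∀ n, n < M n ∧ b n ≤ μ (A ∩ C (M n)) := by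
  have hAC : Tendsto (fun j => μ (A ∩ C j)) atTop (𝓝 ∞) := by
    simpa [Function.comp_def, ← inter_iUnion, hCunion, hA] using
      tendsto_measure_iUnion_atTop (μ := μ) fun i j h => inter_subset_inter_right A (hCmono h)
  exact extraction_forall_of_eventually fun n =>
    (eventually_gt_atTop n).and (hAC.eventually_const_le (hb n).lt_top)

theorem convMu_of_approx (hCmeas : ∀ n, MeasurableSet (C n)) (hCmono : Monotone C)
    (hCunion : ⋃ n, C n = univ) (hM : ∀ n, n ≤ M n) (hε : Tendsto ε atTop (𝓝 0))
    (hEout : ∀ n, μ (E n \ A) ≤ ε n) (hEin : ∀ n, μ ((A ∩ C (M n)) \ E n) ≤ ε n) :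
    ConvMu μ E A := by
  have hEin' (n : ℕ) : μ ((A ∩ C n) \ E n) ≤ ε n :=
    (measure_mono (sdiff_subset_sdiff_left (inter_subset_inter_right A (hCmono (hM n))))).trans
      (hEin n)
  exact convMu_of_tendsto hCmeas hCmono hCunion
    (tendsto_of_tendsto_of_tendsto_of_le_of_le tendsto_const_nhds hε (fun _ => zero_le) hEout)
    (tendsto_of_tendsto_of_tendsto_of_le_of_le tendsto_const_nhds hε (fun _ => zero_le) hEin')

theorem measure_sdiff_le_of_approx (hCmono : Monotone C) (hMmono : Monotone M)
    (hEC : ∀ n, E n ⊆ C (M n)) (hEout : ∀ n, μ (E n \ A) ≤ ε n)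
    (hEin : ∀ n, μ ((A ∩ C (M n)) \ E n) ≤ ε n) {n k : ℕ} (hnk : n ≤ k) :
    μ (E n \ E k) ≤ ε n + ε k :=
  (measure_sdiff_le_measure_sdiff_add ((hEC n).trans (hCmono (hMmono hnk)))).trans
    (add_le_add (hEout n) (hEin k))

theorem measure_inter_sdiff_le_of_approx (hCmono : Monotone C) (hM : ∀ n, n ≤ M n)
    (hEout : ∀ n, μ (E n \ A) ≤ ε n) (hEin : ∀ n, μ ((A ∩ C (M n)) \ E n) ≤ ε n) (n k : ℕ) :
    μ ((E k ∩ C n) \ E n) ≤ ε k + ε n :=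
  (measure_sdiff_le_measure_sdiff_add (inter_subset_right.trans (hCmono (hM n)))).trans
    (add_le_add ((measure_mono (sdiff_subset_sdiff_left inter_subset_left)).trans (hEout k))
      (hEin n))

end

theorem statement18_general {Ω : Type*} [m : MeasurableSpace Ω] (μ : Measure Ω)
    (R : Set (Set Ω))
    (hRunion : ∀ E ∈ R, ∀ F ∈ R, E ∪ F ∈ R)
    (hRdiff : ∀ E ∈ R, ∀ F ∈ R, E \ F ∈ R)
    (hRempty : ∅ ∈ R)
    (hRgen : MeasurableSpace.generateFrom R = m)
    (C : ℕ → Set Ω) (hCmeas : ∀ n, MeasurableSet (C n)) (hCmono : Monotone C)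
    (hCfin : ∀ n, μ (C n) < ⊤)
    (hCunion : (⋃ n, C n) = Set.univ)
    (hCR : ∀ n, 1 ≤ n → C n ∈ R) :
    ∀ A : Set Ω, MeasurableSet A → μ A = ⊤ →
      ∃ E : ℕ → Set Ω, (∀ n, E n ∈ R) ∧ ConvMu μ E A ∧
        (∀ n k, 1 ≤ n → n < k → μ (E n \ E k) ≤ (2 : ℝ≥0∞)⁻¹ ^ n) ∧
        (∀ n k, 1 ≤ n → n < k → μ ((E k ∩ C n) \ E n) ≤ (2 : ℝ≥0∞)⁻¹ ^ n) ∧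
        (∀ n, 1 ≤ n → (2 : ℝ≥0∞) ^ n ≤ μ (E n)) := by
  intro A hA hAtop
  have hR : IsSetRing R :=
    ⟨hRempty, fun _ _ hs ht => hRunion _ hs _ ht, fun _ _ hs ht => hRdiff _ hs _ ht⟩
  obtain ⟨M, hMmono, hM⟩ := exists_strictMono_lt_and_le_measure_inter hCmono hCunion hAtop
    (b := fun n => 2 ^ n + 1) fun n => by finiteness
  have hMle (n : ℕ) : n ≤ M n := (hM n).1.le
  have hεpos (n : ℕ) : 0 < (2 : ℝ≥0∞)⁻¹ ^ (n + 1) :=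
    ENNReal.pow_pos (ENNReal.inv_pos.2 ENNReal.ofNat_ne_top) _
  choose E hER hEC hEout hEin using fun n =>
    hR.exists_mem_subset_measure_sdiff_lt hRgen (hCR (M n) (Nat.one_le_of_lt (hM n).1))
      (hCfin (M n)).ne hA (hεpos n)
  replace hEout n := (hEout n).le
  replace hEin n := (hEin n).le
  refine ⟨E, hER, convMu_of_approx hCmeas hCmono hCunion hMle ?_ hEout hEin,
    fun n k _ hnk => ?_, fun n k _ hnk => ?_, fun n _ => ?_⟩
  · exact (ENNReal.tendsto_pow_atTop_nhds_zero_of_lt_one (by norm_num)).comp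
      (tendsto_add_atTop_nat 1)
  · exact (measure_sdiff_le_of_approx hCmono hMmono.monotone hEC hEout hEin hnk.le).trans
      (ENNReal.inv_two_pow_succ_add_le hnk.le)
  · exact (measure_inter_sdiff_le_of_approx hCmono hMle hEout hEin n k).trans
      ((add_comm _ _).trans_le (ENNReal.inv_two_pow_succ_add_le hnk.le))
  · refine (ENNReal.add_le_add_iff_right ENNReal.one_ne_top).mp ?_
    calc 2 ^ n + 1 ≤ μ (A ∩ C (M n)) := (hM n).2
      _ ≤ μ (A ∩ C (M n) ∩ E n) + μ ((A ∩ C (M n)) \ E n) := measure_le_inter_add_sdiff _ _ _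
      _ ≤ μ (E n) + 1 := add_le_add (measure_mono inter_subset_right)
          ((hEin n).trans (pow_le_one₀ zero_le (ENNReal.inv_le_one.2 one_le_two)))

/-- assuming `C n ∈ R` for `n ≥ 1`, every measurable set of infinite
measure admits a `δ_μ`-expansion: there is a sequence `(E n)` in `R` with
`(E n) →_μ A` and, for all `1 ≤ n < k`: `μ (E n \ E k) ≤ 2⁻ⁿ`,
`μ ((E k ∩ C n) \ E n) ≤ 2⁻ⁿ`, and `μ (E n) ≥ 2ⁿ`. -/
theorem statement18 {Ω : Type*} [m : MeasurableSpace Ω] (μ : Measure Ω)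
    (R : Set (Set Ω)) (hRcount : R.Countable)
    (hRmeas : ∀ E ∈ R, MeasurableSet E)
    (hRunion : ∀ E ∈ R, ∀ F ∈ R, E ∪ F ∈ R)
    (hRdiff : ∀ E ∈ R, ∀ F ∈ R, E \ F ∈ R)
    (hRempty : ∅ ∈ R)
    (hRfin : ∀ E ∈ R, μ E < ⊤)
    (hRcover : ⋃₀ R = Set.univ)
    (hRgen : MeasurableSpace.generateFrom R = m)
    (C : ℕ → Set Ω) (hCmeas : ∀ n, MeasurableSet (C n)) (hCmono : Monotone C)
    (hC0 : C 0 = ∅) (hCfin : ∀ n, μ (C n) < ⊤)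
    (hCgrow : ∀ n, (2 : ℝ≥0∞) ^ (n + 1) ≤ μ (C (n + 1) \ C n))
    (hCunion : (⋃ n, C n) = Set.univ)
    (hCR : ∀ n, 1 ≤ n → C n ∈ R) :
    ∀ A : Set Ω, MeasurableSet A → μ A = ⊤ →
      ∃ E : ℕ → Set Ω, (∀ n, E n ∈ R) ∧ ConvMu μ E A ∧
        (∀ n k, 1 ≤ n → n < k → μ (E n \ E k) ≤ (2 : ℝ≥0∞)⁻¹ ^ n) ∧
        (∀ n k, 1 ≤ n → n < k → μ ((E k ∩ C n) \ E n) ≤ (2 : ℝ≥0∞)⁻¹ ^ n) ∧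
        (∀ n, 1 ≤ n → (2 : ℝ≥0∞) ^ n ≤ μ (E n)) :=
  statement18_general (m := m) μ R hRunion hRdiff hRempty hRgen C hCmeas hCmono hCfin hCunion hCR
end
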